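/- Let ϱ₋, ϱ₊, ϱ_{M−}, ϱ_{M+} be positive real numbers such that A(0) := ϱ₋ϱ_{M−}(ϱ_{M+} − ϱ₊) − ϱ₊ϱ_{M+}(ϱ_{M−} − ϱ₋) = 0. Then (ϱ₋ − ϱ₊)(ϱ_{M−} − ϱ_{M+}) ≥ 0 and consequently 2ϱ₋ϱ₊ + (ϱ₋ − ϱ₊)(ϱ_{M−} − ϱ_{M+}) > 0. -/
import Mathlib

/-- **Lemma (nondegeneracy of `A'(0)` when `A(0) = 0`).** If the positive
densities satisfy `A(0) = 0`, then `(ϱ₋ − ϱ₊)(ϱ_{M−} − ϱ_{M+}) ≥ 0` and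
consequently `2ϱ₋ϱ₊ + (ϱ₋ − ϱ₊)(ϱ_{M−} − ϱ_{M+}) > 0`. -/
theorem A_prime_zero_nonzero
    (ϱm ϱp ϱMm ϱMp : ℝ)
    (hϱm : 0 < ϱm) (hϱp : 0 < ϱp) (hMm : 0 < ϱMm) (hMp : 0 < ϱMp)
    (hA : ϱm * ϱMm * (ϱMp - ϱp) - ϱp * ϱMp * (ϱMm - ϱm) = 0) :
    0 ≤ (ϱm - ϱp) * (ϱMm - ϱMp) ∧ 0 < 2 * ϱm * ϱp + (ϱm - ϱp) * (ϱMm - ϱMp) := by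
  have key : ϱMm * ϱMp * (ϱm - ϱp) = ϱm * ϱp * (ϱMm - ϱMp) := by nlinarith [hA]
  have h1 : 0 ≤ (ϱm - ϱp) * (ϱMm - ϱMp) := by
    have hpos : 0 < ϱm * ϱp := mul_pos hϱm hϱp
    have : (ϱm - ϱp) * (ϱMm - ϱMp) * (ϱm * ϱp) = (ϱm - ϱp)^2 * (ϱMm * ϱMp) := by
      nlinarith [key]
    nlinarith [sq_nonneg (ϱm - ϱp), mul_pos hMm hMp]
  exact ⟨h1, by nlinarith [mul_pos hϱm hϱp]⟩
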